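/- Let p be a prime. Every nonzero nonnegative integer solution (a_1, a_2, a_3, a_4, a_5) of the equation a_1 p^4 + a_2 p^3(p+1) + a_3 p^2(p^2+p+1) + a_4 p(p^3+p^2+p+1) = a_5(p^4+p^3+p^2+p+1) with a_1 + a_2 + a_3 + a_4 − a_5 ≥ 2 and p·a_4 ≥ a_5 can be written as the sum of two nonzero nonnegative integer solutions of the same equation; that is, there are no primitive solutions of height greater than one with p·a_4 ≥ a_5. -/
import Mathlib


/-- A nonnegative-integer solution of
`a₁p⁴ + a₂p³(p+1) + a₃p²(p²+p+1) + a₄p(p³+p²+p+1) = a₅(p⁴+p³+p²+p+1)`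
(stated over `ℤ` with nonnegativity constraints). -/
def Sol5 (p : ℕ) (a : ℤ × ℤ × ℤ × ℤ × ℤ) : Prop :=
  0 ≤ a.1 ∧ 0 ≤ a.2.1 ∧ 0 ≤ a.2.2.1 ∧ 0 ≤ a.2.2.2.1 ∧ 0 ≤ a.2.2.2.2 ∧
    a.1 * (p : ℤ) ^ 4 + a.2.1 * ((p : ℤ) ^ 3 * ((p : ℤ) + 1)) +
        a.2.2.1 * ((p : ℤ) ^ 2 * ((p : ℤ) ^ 2 + p + 1)) +
        a.2.2.2.1 * ((p : ℤ) * ((p : ℤ) ^ 3 + p ^ 2 + p + 1)) =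
      a.2.2.2.2 * ((p : ℤ) ^ 4 + p ^ 3 + p ^ 2 + p + 1)

set_option maxHeartbeats 1000000 in
/-- every nonzero solution of height at least `2` with `p a₄ ≥ a₅` is
the sum of two nonzero solutions; i.e. there are no primitive solutions of height
greater than one with `p a₄ ≥ a₅`. -/
theorem statement19 (p : ℕ) (hp : p.Prime) (a : ℤ × ℤ × ℤ × ℤ × ℤ)
    (ha : Sol5 p a) (hne : a ≠ 0)
    (hht : 2 ≤ a.1 + a.2.1 + a.2.2.1 + a.2.2.2.1 - a.2.2.2.2)
    (h4 : (p : ℤ) * a.2.2.2.1 ≥ a.2.2.2.2) :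
    ∃ b c : ℤ × ℤ × ℤ × ℤ × ℤ, b ≠ 0 ∧ c ≠ 0 ∧ Sol5 p b ∧ Sol5 p c ∧ a = b + c := by
  obtain ⟨a1, a2, a3, a4, a5⟩ := a
  obtain ⟨n1, n2, n3, n4, n5, heq⟩ := ha
  dsimp only at hht h4 heq n1 n2 n3 n4 n5
  have hP : (2 : ℤ) ≤ (p : ℤ) := by exact_mod_cast hp.two_le
  set P : ℤ := (p : ℤ) with hPdef
  have hc5 : (0 : ℤ) < P ^ 4 + P ^ 3 + P ^ 2 + P + 1 := by positivity
  rcases le_or_gt P a1 with hc1 | hc1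
  · -- Case 1 : a1 ≥ p, use b = (p,0,0,1,p)
    have ha5pos : 0 < a5 := by
      rcases lt_or_ge 0 a5 with h | h
      · exact h
      · exfalso
        have hz : a5 = 0 := le_antisymm h n5
        subst hz
        have e1 : a1 ≤ a1 * P ^ 4 := le_mul_of_one_le_right n1 (by nlinarith)
        have e2 : a2 ≤ a2 * (P ^ 3 * (P + 1)) := le_mul_of_one_le_right n2 (by nlinarith)
        have e3 : a3 ≤ a3 * (P ^ 2 * (P ^ 2 + P + 1)) := le_mul_of_one_le_right n3 (by nlinarith)
        have e4 : a4 ≤ a4 * (P * (P ^ 3 + P ^ 2 + P + 1)) := le_mul_of_one_le_right n4 (by nlinarith)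
        nlinarith [heq, hht, e1, e2, e3, e4]
    have hdvd : P ∣ a5 := by
      have hd1 : P ∣ a5 * (P ^ 4 + P ^ 3 + P ^ 2 + P + 1) :=
        ⟨a1 * P ^ 3 + a2 * (P ^ 2 * (P + 1)) + a3 * (P * (P ^ 2 + P + 1)) +
          a4 * (P ^ 3 + P ^ 2 + P + 1), by linear_combination -heq⟩
      have hprime : Prime P := Nat.prime_iff_prime_int.mp hp
      rcases hprime.dvd_mul.mp hd1 with h | h
      · exact h
      · exfalso
        obtain ⟨t, ht⟩ := h
        have hone : P ∣ 1 := ⟨t - (P ^ 3 + P ^ 2 + P + 1), by linear_combination ht⟩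
        have := Int.le_of_dvd one_pos hone
        linarith
    have ha5p : P ≤ a5 := Int.le_of_dvd ha5pos hdvd
    have ha41 : 1 ≤ a4 := by
      by_contra hx
      push_neg at hx
      have : P * a4 ≤ 0 := mul_nonpos_of_nonneg_of_nonpos (by linarith) (by linarith)
      linarith
    refine ⟨(P, 0, 0, 1, P), (a1 - P, a2, a3, a4 - 1, a5 - P), ?_, ?_, ?_, ?_, ?_⟩
    · intro hb
      simp only [Prod.mk.injEq, Prod.mk_eq_zero] at hb
      simp [Prod.ext_iff] at hb
    · intro hc
      simp only [Prod.ext_iff] at hc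
      obtain ⟨e1, e2, e3, e4, e5⟩ := hc
      simp only [Prod.fst_zero, Prod.snd_zero] at e1 e2 e3 e4 e5
      linarith [sub_eq_zero.mp e1, sub_eq_zero.mp e4, sub_eq_zero.mp e5]
    · unfold Sol5; dsimp only
      exact ⟨by linarith, le_refl 0, le_refl 0, by norm_num, by linarith, by ring⟩
    · unfold Sol5; dsimp only
      exact ⟨by linarith, n2, n3, by linarith, by linarith, by linear_combination heq⟩
    · simp only [Prod.mk_add_mk, Prod.mk.injEq]
      refine ⟨by ring, by ring, by ring, by ring, by ring⟩
  · rcases le_or_gt ((P - a1) * P) a2 with hc2 | hc2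
    · -- Case 2 : a1 < p, a2 ≥ (p-a1)p
      have t1 : 0 ≤ (P * a4 - a5) * (P ^ 4 + P ^ 3 + P ^ 2 + P + 1) :=
        mul_nonneg (by linarith) (by positivity)
      have t2 : (P - a1) * P * (P ^ 3 * (P + 1)) ≤ a2 * (P ^ 3 * (P + 1)) :=
        mul_le_mul_of_nonneg_right hc2 (by positivity)
      have t3 : 0 ≤ a3 * (P ^ 2 * (P ^ 2 + P + 1)) := mul_nonneg n3 (by positivity)
      have X : P ^ 5 * (P - a1 + 1) ≤ P ^ 5 * a4 := by linarith [t1, t2, t3, heq]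
      have hb4 : P - a1 + 1 ≤ a4 := le_of_mul_le_mul_left X (by positivity)
      have t4 : (P - a1 + 1) * (P * (P ^ 3 + P ^ 2 + P + 1)) ≤
          a4 * (P * (P ^ 3 + P ^ 2 + P + 1)) :=
        mul_le_mul_of_nonneg_right hb4 (by positivity)
      have Y : (a1 + (P - a1) * (P + 1)) * (P ^ 4 + P ^ 3 + P ^ 2 + P + 1) ≤
          a5 * (P ^ 4 + P ^ 3 + P ^ 2 + P + 1) := by linarith [heq, t2, t3, t4]
      have ha5b : a1 + (P - a1) * (P + 1) ≤ a5 := le_of_mul_le_mul_right Y hc5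
      have hb5n : 0 ≤ a1 + (P - a1) * (P + 1) := by
        have := mul_nonneg (show (0:ℤ) ≤ P - a1 by linarith) (show (0:ℤ) ≤ P + 1 by linarith)
        linarith
      refine ⟨(a1, (P - a1) * P, 0, P - a1 + 1, a1 + (P - a1) * (P + 1)),
        (0, a2 - (P - a1) * P, a3, a4 - (P - a1 + 1), a5 - (a1 + (P - a1) * (P + 1))),
        ?_, ?_, ?_, ?_, ?_⟩
      · intro hb
        simp only [Prod.ext_iff] at hb
        obtain ⟨e1, e2, e3, e4, e5⟩ := hb
        simp only [Prod.fst_zero, Prod.snd_zero] at e1 e2 e3 e4 e5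
        linarith
      · intro hc
        simp only [Prod.ext_iff] at hc
        obtain ⟨e1, e2, e3, e4, e5⟩ := hc
        simp only [Prod.fst_zero, Prod.snd_zero] at e1 e2 e3 e4 e5
        have e2' := sub_eq_zero.mp e2
        have e4' := sub_eq_zero.mp e4
        have e5' := sub_eq_zero.mp e5
        linarith
      · unfold Sol5; dsimp only
        exact ⟨n1, mul_nonneg (by linarith) (by linarith), le_refl 0, by linarith, hb5n,
          by ring⟩
      · unfold Sol5; dsimp only
        exact ⟨le_refl 0, by linarith, n3, by linarith, by linarith, by linear_combination heq⟩
      · simp only [Prod.mk_add_mk, Prod.mk.injEq]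
        refine ⟨by ring, by ring, by ring, by ring, by ring⟩
    · rcases le_or_gt (((P - a1) * P - a2) * P) a3 with hc3 | hc3
      · -- Case 3a
        have hk2 : 1 ≤ (P - a1) * P - a2 := by nlinarith
        have t1 : 0 ≤ (P * a4 - a5) * (P ^ 4 + P ^ 3 + P ^ 2 + P + 1) :=
          mul_nonneg (by linarith) (by positivity)
        have t3 : ((P - a1) * P - a2) * P * (P ^ 2 * (P ^ 2 + P + 1)) ≤
            a3 * (P ^ 2 * (P ^ 2 + P + 1)) :=
          mul_le_mul_of_nonneg_right hc3 (by positivity)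
        have X : P ^ 5 * ((P - a1) + ((P - a1) * P - a2) + 1) ≤ P ^ 5 * a4 := by
          linarith [t1, t3, heq]
        have hb4 : (P - a1) + ((P - a1) * P - a2) + 1 ≤ a4 :=
          le_of_mul_le_mul_left X (by positivity)
        have t4 : ((P - a1) + ((P - a1) * P - a2) + 1) * (P * (P ^ 3 + P ^ 2 + P + 1)) ≤
            a4 * (P * (P ^ 3 + P ^ 2 + P + 1)) :=
          mul_le_mul_of_nonneg_right hb4 (by positivity)
        have Y : (a1 + a2 + ((P - a1) * P - a2) * P + (P - a1) + ((P - a1) * P - a2)) *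
            (P ^ 4 + P ^ 3 + P ^ 2 + P + 1) ≤ a5 * (P ^ 4 + P ^ 3 + P ^ 2 + P + 1) := by
          linarith [heq, t3, t4]
        have ha5b : a1 + a2 + ((P - a1) * P - a2) * P + (P - a1) + ((P - a1) * P - a2) ≤ a5 :=
          le_of_mul_le_mul_right Y hc5
        have hk2P : 0 ≤ ((P - a1) * P - a2) * P := mul_nonneg (by linarith) (by linarith)
        refine ⟨(a1, a2, ((P - a1) * P - a2) * P, (P - a1) + ((P - a1) * P - a2) + 1,
            a1 + a2 + ((P - a1) * P - a2) * P + (P - a1) + ((P - a1) * P - a2)),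
          (0, 0, a3 - ((P - a1) * P - a2) * P, a4 - ((P - a1) + ((P - a1) * P - a2) + 1),
            a5 - (a1 + a2 + ((P - a1) * P - a2) * P + (P - a1) + ((P - a1) * P - a2))),
          ?_, ?_, ?_, ?_, ?_⟩
        · intro hb
          simp only [Prod.ext_iff] at hb
          obtain ⟨e1, e2, e3, e4, e5⟩ := hb
          simp only [Prod.fst_zero, Prod.snd_zero] at e1 e2 e3 e4 e5
          linarith
        · intro hc
          simp only [Prod.ext_iff] at hc
          obtain ⟨e1, e2, e3, e4, e5⟩ := hc
          simp only [Prod.fst_zero, Prod.snd_zero] at e1 e2 e3 e4 e5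
          have e3' := sub_eq_zero.mp e3
          have e4' := sub_eq_zero.mp e4
          have e5' := sub_eq_zero.mp e5
          linarith
        · unfold Sol5; dsimp only
          exact ⟨n1, n2, hk2P, by linarith, by linarith, by ring⟩
        · unfold Sol5; dsimp only
          exact ⟨le_refl 0, le_refl 0, by linarith, by linarith, by linarith,
            by linear_combination heq⟩
        · simp only [Prod.mk_add_mk, Prod.mk.injEq]
          refine ⟨by ring, by ring, by ring, by ring, by ring⟩
      · -- Case 3b
        have hk1 : 1 ≤ P - a1 := by linarith
        have hk2 : 1 ≤ (P - a1) * P - a2 := by nlinarith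
        have hk3 : 1 ≤ ((P - a1) * P - a2) * P - a3 := by linarith
        have key : a4 - ((((P - a1) * P - a2) * P - a3) * (P + 1) + ((P - a1) * P - a2) +
            (P - a1) + 1) = (a1 + a2 + a3 + a4 - a5 - 1) * (P ^ 4 + P ^ 3 + P ^ 2 + P + 1) := by
          linear_combination -heq
        have hprod : 0 ≤ (a1 + a2 + a3 + a4 - a5 - 1) * (P ^ 4 + P ^ 3 + P ^ 2 + P + 1) :=
          mul_nonneg (by linarith) (by positivity)
        have hprod2 : 0 ≤ (a1 + a2 + a3 + a4 - a5 - 1) * (P ^ 4 + P ^ 3 + P ^ 2 + P) :=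
          mul_nonneg (by linarith) (by positivity)
        have hb4 : (((P - a1) * P - a2) * P - a3) * (P + 1) + ((P - a1) * P - a2) +
            (P - a1) + 1 ≤ a4 := by linarith
        have hB4n : 1 ≤ (((P - a1) * P - a2) * P - a3) * (P + 1) + ((P - a1) * P - a2) +
            (P - a1) + 1 := by
          have := mul_nonneg (show (0:ℤ) ≤ ((P - a1) * P - a2) * P - a3 by linarith)
            (show (0:ℤ) ≤ P + 1 by linarith)
          linarith
        have ha5b : a1 + a2 + a3 + ((((P - a1) * P - a2) * P - a3) * (P + 1) +
            ((P - a1) * P - a2) + (P - a1) + 1) - 1 ≤ a5 := by linarith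
        refine ⟨(a1, a2, a3, (((P - a1) * P - a2) * P - a3) * (P + 1) + ((P - a1) * P - a2) +
            (P - a1) + 1, a1 + a2 + a3 + ((((P - a1) * P - a2) * P - a3) * (P + 1) +
            ((P - a1) * P - a2) + (P - a1) + 1) - 1),
          (0, 0, 0, a4 - ((((P - a1) * P - a2) * P - a3) * (P + 1) + ((P - a1) * P - a2) +
            (P - a1) + 1), a5 - (a1 + a2 + a3 + ((((P - a1) * P - a2) * P - a3) * (P + 1) +
            ((P - a1) * P - a2) + (P - a1) + 1) - 1)),
          ?_, ?_, ?_, ?_, ?_⟩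
        · intro hb
          simp only [Prod.ext_iff] at hb
          obtain ⟨e1, e2, e3, e4, e5⟩ := hb
          simp only [Prod.fst_zero, Prod.snd_zero] at e1 e2 e3 e4 e5
          linarith
        · intro hc
          simp only [Prod.ext_iff] at hc
          obtain ⟨e1, e2, e3, e4, e5⟩ := hc
          simp only [Prod.fst_zero, Prod.snd_zero] at e1 e2 e3 e4 e5
          have e4' := sub_eq_zero.mp e4
          have e5' := sub_eq_zero.mp e5
          linarith
        · unfold Sol5; dsimp only
          exact ⟨n1, n2, n3, by linarith, by linarith, by ring⟩
        · unfold Sol5; dsimp only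
          exact ⟨le_refl 0, le_refl 0, le_refl 0, by linarith, by linarith,
            by linear_combination heq⟩
        · simp only [Prod.mk_add_mk, Prod.mk.injEq]
          refine ⟨by ring, by ring, by ring, by ring, by ring⟩
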